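/- For real numbers x, y with x − y ∈ ℤ, x > y, identify the segment [x,y] with the finite set {y, y+1, …, x} ⊆ ℝ. Show that two segments [x,y] and [x′,y′] (with x ≥ y, x′ ≥ y′, x − y, x′ − y′ ∈ ℤ) satisfy the three conditions (i) [x,y] ⊄ [x′,y′], (ii) [x′,y′] ⊄ [x,y], (iii) [x,y] ∪ [x′,y′] is a segment, if and only if x − x′ is a nonzero integer and, assuming WLOG x > x′: y > y′ and y ≤ x′ + 1. -/
import Mathlib


/-- The segment `{y, y+1, …, x}` (for `x ≥ y`, `x - y ∈ ℤ`) as a subset of `ℝ`. -/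
def segSet (x y : ℝ) : Set ℝ := {t | y ≤ t ∧ t ≤ x ∧ ∃ n : ℤ, t = x - n}

/-- If `a - b` is an integer and `b < a`, then `b + 1 ≤ a`. -/
lemma int_gap (a b : ℝ) (k : ℤ) (h : a - b = k) (hlt : b < a) : b + 1 ≤ a := by
  have h0 : (0:ℝ) < (k:ℝ) := by linarith
  have h1 : (0:ℤ) < k := by exact_mod_cast h0
  have h2 : (1:ℤ) ≤ k := h1
  have h3 : (1:ℝ) ≤ (k:ℝ) := by exact_mod_cast h2
  linarith

/-- Two segments `[x,y]`, `[x',y']` satisfy (i) `[x,y] ⊄ [x',y']`,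
(ii) `[x',y'] ⊄ [x,y]`, (iii) their union is a segment, iff `x - x'` is a nonzero
integer and (assuming WLOG `x > x'`) `y > y'` and `y ≤ x' + 1`. -/
theorem stmt7 (x y x' y' : ℝ) (hxy : y ≤ x) (hx'y' : y' ≤ x')
    (hint : ∃ n : ℤ, x - y = n) (hint' : ∃ n : ℤ, x' - y' = n)
    (hwlog : x' < x) :
    (¬ segSet x y ⊆ segSet x' y' ∧ ¬ segSet x' y' ⊆ segSet x y ∧
        ∃ u v : ℝ, v ≤ u ∧ (∃ n : ℤ, u - v = n) ∧ segSet x y ∪ segSet x' y' = segSet u v) ↔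
      (∃ m : ℤ, m ≠ 0 ∧ x - x' = m) ∧ y' < y ∧ y ≤ x' + 1 := by
  obtain ⟨a, ha⟩ := hint
  obtain ⟨b, hb⟩ := hint'
  constructor
  · rintro ⟨h1, h2, u, v, huv, ⟨k, hk⟩, hun⟩
    -- x and x' belong to the union, hence to segSet u v
    have hxmem : x ∈ segSet u v := by
      rw [← hun]; left; exact ⟨hxy, le_refl x, 0, by push_cast; ring⟩
    have hx'mem : x' ∈ segSet u v := by
      rw [← hun]; right; exact ⟨hx'y', le_refl x', 0, by push_cast; ring⟩
    obtain ⟨hvx, hxu, n1, hn1⟩ := hxmem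
    obtain ⟨hvx', hx'u, n2, hn2⟩ := hx'mem
    have hm : x - x' = ((n2 - n1 : ℤ) : ℝ) := by push_cast; linarith
    have hmne : (n2 - n1 : ℤ) ≠ 0 := by
      intro h0
      rw [h0] at hm
      simp at hm
      linarith
    -- y' < y
    obtain ⟨t, htmem, htnot⟩ := Set.not_subset.mp h2
    obtain ⟨hty', htx', n, htn⟩ := htmem
    have hty : t < y := by
      by_contra hge
      push_neg at hge
      exact htnot ⟨hge, by linarith, (n2 - n1) + n, by push_cast; push_cast at hm; linarith⟩
    have hy'y : y' < y := lt_of_le_of_lt hty' hty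
    -- u = x
    have humem : u ∈ segSet x y ∪ segSet x' y' := by
      rw [hun]; exact ⟨huv, le_refl u, 0, by push_cast; ring⟩
    have hux : u = x := by
      rcases humem with ⟨_, hle, _⟩ | ⟨_, hle, _⟩
      · linarith
      · linarith
    -- v ≤ y'
    have hy'mem : y' ∈ segSet u v := by
      rw [← hun]; right; exact ⟨le_refl y', hx'y', b, by linarith⟩
    have hvy' : v ≤ y' := hy'mem.1
    -- y - y' is a positive integer, so y' ≤ y - 1
    have hyy' : y - y' = ((n2 - n1 - a + b : ℤ) : ℝ) := by push_cast; push_cast at hm; linarith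
    have hy'1 : y' + 1 ≤ y := int_gap y y' _ hyy' hy'y
    -- y - 1 belongs to segSet u v, hence to the union
    have hy1mem : (y - 1) ∈ segSet x y ∪ segSet x' y' := by
      rw [hun]
      exact ⟨by linarith, by rw [hux]; linarith, a + 1, by rw [hux]; push_cast; linarith⟩
    rcases hy1mem with ⟨hle, _, _⟩ | ⟨_, hle, _⟩
    · linarith
    · exact ⟨⟨n2 - n1, hmne, hm⟩, hy'y, by linarith⟩
  · rintro ⟨⟨m, hm0, hm⟩, hy'y, hyx'⟩
    have hm1 : (1:ℝ) ≤ (m:ℝ) := by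
      have h0 : (0:ℝ) < (m:ℝ) := by linarith
      have h1 : (0:ℤ) < m := by exact_mod_cast h0
      exact_mod_cast h1
    have hyy' : y - y' = ((m - a + b : ℤ) : ℝ) := by push_cast; linarith
    have hy'1 : y' + 1 ≤ y := int_gap y y' _ hyy' hy'y
    refine ⟨?_, ?_, x, y', by linarith, ⟨m + b, by push_cast; linarith⟩, ?_⟩
    · intro hsub
      obtain ⟨_, hle, _⟩ := hsub ⟨hxy, le_refl x, 0, by push_cast; ring⟩
      linarith
    · intro hsub
      obtain ⟨hle, _, _⟩ := hsub ⟨le_refl y', hx'y', b, by linarith⟩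
      linarith
    · ext t
      simp only [Set.mem_union, segSet, Set.mem_setOf_eq]
      constructor
      · rintro (⟨ht1, ht2, n, hn⟩ | ⟨ht1, ht2, n, hn⟩)
        · exact ⟨by linarith, ht2, n, hn⟩
        · exact ⟨ht1, by linarith, n + m, by push_cast; linarith⟩
      · rintro ⟨ht1, ht2, n, hn⟩
        by_cases hty : y ≤ t
        · exact Or.inl ⟨hty, ht2, n, hn⟩
        · push_neg at hty
          have hyt : y - t = ((n - a : ℤ) : ℝ) := by push_cast; linarith
          have ht1y : t + 1 ≤ y := int_gap y t _ hyt hty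
          exact Or.inr ⟨ht1, by linarith, n - m, by push_cast; linarith⟩
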